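/- If the sequence (u_n) contains no zero terms but contains at least one negative term, then the set of local extremum points of f is dense in [0, 1]. -/

import Mathlib

open scoped BigOperators

/-- The value `Δ^E_g` of the Engel series with digit sequence `g`
(`g n` is the paper's `g_{n+1}`). -/
noncomputable def engelSum (g : ℕ → ℕ) : ℝ :=
  ∑' n : ℕ, ∏ k ∈ Finset.range (n + 1),
    ((2 : ℝ) + ∑ i ∈ Finset.range (k + 1), (g i : ℝ))⁻¹

/-- The value of the series `r_{g_1} + ∑_{k≥2} r_{g_k} ∏_{i=1}^{k-1} u_{g_i}`
defining `f` on the digit sequence `g`. -/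
noncomputable def fSeries (u r : ℕ → ℝ) (g : ℕ → ℕ) : ℝ :=
  r (g 0) + ∑' k : ℕ, r (g (k + 1)) * ∏ i ∈ Finset.range (k + 1), u (g i)

/-- `rpred r n = r (n-1)`, with the convention `r (-1) = 1`. -/
noncomputable def rpred (r : ℕ → ℝ) (n : ℕ) : ℝ := if n = 0 then 1 else r (n - 1)

/-- A strict local maximum point: f t < f x₀ in a punctured neighbourhood. -/
def IsStrictLocalMaxPt (f : ℝ → ℝ) (x₀ : ℝ) : Prop :=
  ∀ᶠ t in nhdsWithin x₀ {x₀}ᶜ, f t < f x₀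

/-- A strict local minimum point: f x₀ < f t in a punctured neighbourhood. -/
def IsStrictLocalMinPt (f : ℝ → ℝ) (x₀ : ℝ) : Prop :=
  ∀ᶠ t in nhdsWithin x₀ {x₀}ᶜ, f x₀ < f t

/-!
A finite E-representation `(g_1, …, g_k, N, 0, 0, …)` with `N ≥ 1` is the common endpoint of two
adjacent cylinders: the right end of the cylinder of `(g_1, …, g_k, N)` and the left end of the
cylinder of `(g_1, …, g_k, N - 1)`. On the cylinder of a prefix, `f` is an affine function of the
value of the series on the tail, with slope `∏ u_{g_i}`; and the series takes values in `(0, 1]`,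
with `1` attained only by the zero sequence, because each step `t ↦ r_j + u_j t` maps `[0, 1]` into
`(0, 1]`. Take `N` to be the first index with `u_N < 0`, so that `u_{N-1} > 0`. Then on both sides
of such a point `x₀`, `f x - f x₀` has the sign of `∏_{i ≤ k} u_{g_i}`: on the left it is this
product times `u_N (w - 1)` with `w < 1`, on the right this product times `u_{N-1} w` with `w > 0`.
So `x₀` is a strict local extremum, and such points are dense because truncating E-representations
approximates every point of `(0, 1]`.
-/

open Finset Filter Topology

namespace EngelSeries

noncomputable def engelDenom (b : ℝ) (g : ℕ → ℕ) (K : ℕ) : ℝ := b + ∑ i ∈ range K, (g i : ℝ)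

noncomputable def engelProd (b : ℝ) (g : ℕ → ℕ) (K : ℕ) : ℝ :=
  ∏ k ∈ range K, (engelDenom b g (k + 1))⁻¹

noncomputable def engelSumFrom (b : ℝ) (g : ℕ → ℕ) : ℝ := ∑' n, engelProd b g (n + 1)

noncomputable def engelPartial (b : ℝ) (g : ℕ → ℕ) (K : ℕ) : ℝ :=
  ∑ n ∈ range K, engelProd b g (n + 1)

/-- The Engel sums of the digit sequences beginning with `g 0, …, g (K-1)` fill the interval
`(engelPartial b g K, cylinderRight b g K]`. -/
noncomputable def cylinderRight (b : ℝ) (g : ℕ → ℕ) (K : ℕ) : ℝ :=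
  engelPartial b g K + engelProd b g K * (engelDenom b g K - 1)⁻¹

theorem engelSumFrom_two (g : ℕ → ℕ) : engelSumFrom 2 g = engelSum g := rfl

theorem inv_mul_one_add_inv_sub_one {c : ℝ} (hc : 1 < c) : c⁻¹ * (1 + (c - 1)⁻¹) = (c - 1)⁻¹ := by
  have : c - 1 ≠ 0 := by linarith
  field_simp
  ring

theorem tsum_inv_pow_succ {b : ℝ} (hb : 1 < b) : ∑' n : ℕ, b⁻¹ ^ (n + 1) = (b - 1)⁻¹ := by
  have h0 : 0 ≤ b⁻¹ := by positivity
  have h1 : b⁻¹ < 1 := inv_lt_one_of_one_lt₀ hb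
  simp_rw [pow_succ, tsum_mul_right, tsum_geometric_of_lt_one h0 h1]
  have : b - 1 ≠ 0 := by linarith
  field_simp

theorem exists_abs_le_of_tendsto_zero {u : ℕ → ℝ} (hu : Tendsto u atTop (𝓝 0))
    (h1 : ∀ n, |u n| < 1) : ∃ θ < 1, ∀ n, |u n| ≤ θ := by
  obtain ⟨M, hM⟩ := Metric.tendsto_atTop.mp hu 2⁻¹ (by norm_num)
  obtain ⟨m, -, hm⟩ := (range (M + 1)).exists_max_image (fun n => |u n|) ⟨0, by simp⟩
  refine ⟨max 2⁻¹ |u m|, max_lt (by norm_num) (h1 m), fun n => ?_⟩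
  rcases lt_or_ge n M with hn | hn
  · exact (hm n (mem_range.mpr (by omega))).trans (le_max_right _ _)
  · simpa using (hM n hn).le.trans (le_max_left 2⁻¹ |u m|)

theorem summable_inv_pow_succ {b : ℝ} (hb : 1 < b) : Summable fun n : ℕ => b⁻¹ ^ (n + 1) :=
  (summable_nat_add_iff 1).mpr
    (summable_geometric_of_lt_one (by positivity) (inv_lt_one_of_one_lt₀ hb))

variable {b : ℝ} {g h : ℕ → ℕ}

theorem le_engelDenom (K : ℕ) : b ≤ engelDenom b g K :=
  le_add_of_nonneg_right (sum_nonneg fun _ _ => Nat.cast_nonneg _)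

theorem engelDenom_succ (K : ℕ) : engelDenom b g (K + 1) = engelDenom b g K + g K := by
  rw [engelDenom, engelDenom, sum_range_succ, add_assoc]

theorem engelDenom_shift (K : ℕ) :
    engelDenom (b + g 0) (fun i => g (i + 1)) K = engelDenom b g (K + 1) := by
  rw [engelDenom, engelDenom, sum_range_succ' _ K]
  ring

theorem engelProd_pos (hb : 0 < b) (K : ℕ) : 0 < engelProd b g K :=
  prod_pos fun _ _ => inv_pos.mpr (hb.trans_le (le_engelDenom _))

theorem engelProd_le_inv_pow (hb : 0 < b) (K : ℕ) : engelProd b g K ≤ b⁻¹ ^ K := by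
  calc engelProd b g K ≤ ∏ _k ∈ range K, b⁻¹ :=
        prod_le_prod (fun _ _ => (inv_pos.mpr (hb.trans_le (le_engelDenom _))).le)
          fun _ _ => inv_anti₀ hb (le_engelDenom _)
    _ = b⁻¹ ^ K := by simp

theorem engelProd_succ (K : ℕ) :
    engelProd b g (K + 1) = engelProd b g K * (engelDenom b g (K + 1))⁻¹ :=
  prod_range_succ _ _

theorem engelProd_succ' (K : ℕ) :
    engelProd b g (K + 1) = (b + g 0)⁻¹ * engelProd (b + g 0) (fun i => g (i + 1)) K := by
  simp only [engelProd, prod_range_succ' _ K, engelDenom_shift]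
  rw [mul_comm]
  simp [engelDenom]

theorem summable_engelProd (hb : 1 < b) : Summable fun n => engelProd b g (n + 1) :=
  .of_nonneg_of_le (fun _ => (engelProd_pos (by linarith) _).le)
    (fun _ => engelProd_le_inv_pow (by linarith) _) (summable_inv_pow_succ hb)

theorem one_lt_add_digit (hb : 1 < b) (n : ℕ) : 1 < b + n :=
  lt_add_of_lt_of_nonneg hb n.cast_nonneg

theorem engelSumFrom_pos (hb : 1 < b) : 0 < engelSumFrom b g :=
  (summable_engelProd hb).tsum_pos (fun _ => (engelProd_pos (by linarith) _).le) 0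
    (engelProd_pos (by linarith) _)

theorem engelSumFrom_le_inv_sub_one (hb : 1 < b) : engelSumFrom b g ≤ (b - 1)⁻¹ := by
  rw [← tsum_inv_pow_succ hb]
  exact (summable_engelProd hb).tsum_le_tsum (fun _ => engelProd_le_inv_pow (by linarith) _)
    (summable_inv_pow_succ hb)

theorem engelSumFrom_const_zero (hb : 1 < b) : engelSumFrom b (fun _ => 0) = (b - 1)⁻¹ := by
  rw [← tsum_inv_pow_succ hb]
  exact tsum_congr fun n => by simp [engelProd, engelDenom]

theorem engelSumFrom_eq_shift (hb : 1 < b) :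
    engelSumFrom b g = (b + g 0)⁻¹ * (1 + engelSumFrom (b + g 0) (fun i => g (i + 1))) := by
  rw [engelSumFrom, (summable_engelProd hb).tsum_eq_zero_add]
  simp_rw [engelProd_succ' (g := g), tsum_mul_left, engelSumFrom]
  simp [engelProd, mul_add]

theorem inv_add_head_lt_engelSumFrom (hb : 1 < b) : (b + g 0)⁻¹ < engelSumFrom b g := by
  have := inv_pos.mpr (zero_lt_one.trans (one_lt_add_digit hb (g 0)))
  rw [engelSumFrom_eq_shift hb]
  nlinarith [engelSumFrom_pos (g := fun i => g (i + 1)) (one_lt_add_digit hb (g 0))]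

theorem engelSumFrom_le_inv_add_head_sub_one (hb : 1 < b) :
    engelSumFrom b g ≤ (b + g 0 - 1)⁻¹ := by
  have hc := one_lt_add_digit hb (g 0)
  rw [engelSumFrom_eq_shift hb, ← inv_mul_one_add_inv_sub_one hc]
  gcongr
  exact engelSumFrom_le_inv_sub_one hc

theorem head_eq_of_mem_Ioc (hb : 1 < b) (hlow : (b + h 0)⁻¹ < engelSumFrom b g)
    (hup : engelSumFrom b g ≤ (b + h 0 - 1)⁻¹) : g 0 = h 0 := by
  have hg := inv_add_head_lt_engelSumFrom (g := g) hb
  have hg' := engelSumFrom_le_inv_add_head_sub_one (g := g) hb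
  rcases lt_trichotomy (g 0) (h 0) with hlt | heq | hgt
  · have : (g 0 : ℝ) + 1 ≤ h 0 := by exact_mod_cast hlt
    have : (b + h 0 - 1)⁻¹ ≤ (b + g 0)⁻¹ :=
      inv_anti₀ (by linarith [one_lt_add_digit hb (g 0)]) (by linarith)
    linarith
  · exact heq
  · have : (h 0 : ℝ) + 1 ≤ g 0 := by exact_mod_cast hgt
    have : (b + g 0 - 1)⁻¹ ≤ (b + h 0)⁻¹ :=
      inv_anti₀ (by linarith [one_lt_add_digit hb (h 0)]) (by linarith)
    linarith

theorem engelPartial_succ (K : ℕ) :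
    engelPartial b g (K + 1) = engelPartial b g K + engelProd b g (K + 1) :=
  sum_range_succ _ _

theorem engelPartial_succ' (K : ℕ) :
    engelPartial b g (K + 1) =
      (b + g 0)⁻¹ * (1 + engelPartial (b + g 0) (fun i => g (i + 1)) K) := by
  simp only [engelPartial, sum_range_succ' _ K, engelProd_succ', mul_add, mul_sum]
  simp [engelProd, add_comm]

theorem cylinderRight_succ' (K : ℕ) :
    cylinderRight b g (K + 1) =
      (b + g 0)⁻¹ * (1 + cylinderRight (b + g 0) (fun i => g (i + 1)) K) := by
  rw [cylinderRight, cylinderRight, engelPartial_succ', engelProd_succ', ← engelDenom_shift]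
  ring

theorem engelPartial_nonneg (hb : 0 < b) (K : ℕ) : 0 ≤ engelPartial b g K :=
  sum_nonneg fun _ _ => (engelProd_pos hb _).le

theorem engelPartial_lt_cylinderRight (hb : 1 < b) (K : ℕ) :
    engelPartial b g K < cylinderRight b g K := by
  have := engelProd_pos (g := g) (by linarith) K
  have : 0 < (engelDenom b g K - 1)⁻¹ :=
    inv_pos.mpr (by linarith [le_engelDenom (g := g) (b := b) K])
  rw [cylinderRight]
  nlinarith

theorem cylinderRight_le_inv_sub_one (hb : 1 < b) (K : ℕ) : cylinderRight b g K ≤ (b - 1)⁻¹ := by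
  induction K generalizing b g with
  | zero => simp [cylinderRight, engelPartial, engelProd, engelDenom]
  | succ K ih =>
    have hc := one_lt_add_digit hb (g 0)
    calc cylinderRight b g (K + 1)
        ≤ (b + g 0)⁻¹ * (1 + (b + g 0 - 1)⁻¹) := by
          rw [cylinderRight_succ']
          gcongr
          exact ih hc
      _ = (b + g 0 - 1)⁻¹ := inv_mul_one_add_inv_sub_one hc
      _ ≤ (b - 1)⁻¹ := inv_anti₀ (by linarith) (by linarith [(g 0).cast_nonneg (α := ℝ)])

theorem engelSumFrom_split (hb : 1 < b) (K : ℕ) :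
    engelSumFrom b g = engelPartial b g K +
      engelProd b g K * engelSumFrom (engelDenom b g K) (fun i => g (i + K)) := by
  induction K generalizing b g with
  | zero => simp [engelPartial, engelProd, engelDenom]
  | succ K ih =>
    rw [engelSumFrom_eq_shift hb, ih (one_lt_add_digit hb (g 0)), engelPartial_succ',
      engelProd_succ', engelDenom_shift]
    simp only [add_assoc]
    ring

theorem eq_of_mem_cylinder (hb : 1 < b) {K : ℕ} (hlow : engelPartial b h K < engelSumFrom b g)
    (hup : engelSumFrom b g ≤ cylinderRight b h K) : ∀ i < K, g i = h i := by
  induction K generalizing b g h with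
  | zero => intro i hi; omega
  | succ K ih =>
    have hc := one_lt_add_digit hb (h 0)
    have hc0 : 0 < (b + h 0)⁻¹ := inv_pos.mpr (by linarith)
    have head : g 0 = h 0 := by
      refine head_eq_of_mem_Ioc hb (lt_of_le_of_lt ?_ hlow) (hup.trans ?_)
      · rw [engelPartial_succ']
        exact le_mul_of_one_le_right hc0.le
          (le_add_of_nonneg_right (engelPartial_nonneg (by linarith) K))
      · rw [cylinderRight_succ', ← inv_mul_one_add_inv_sub_one hc]
        gcongr
        exact cylinderRight_le_inv_sub_one hc K
    rw [engelSumFrom_eq_shift hb, head, engelPartial_succ'] at hlow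
    rw [engelSumFrom_eq_shift hb, head, cylinderRight_succ'] at hup
    have tail := ih hc ((add_lt_add_iff_left 1).mp ((mul_lt_mul_iff_right₀ hc0).mp hlow))
      ((add_le_add_iff_left 1).mp ((mul_le_mul_iff_right₀ hc0).mp hup))
    rintro (_ | i) hi
    · exact head
    · exact tail i (by omega)

theorem engelDenom_congr {K : ℕ} (hgh : ∀ i < K, g i = h i) :
    engelDenom b g K = engelDenom b h K := by
  rw [engelDenom, engelDenom, sum_congr rfl fun i hi => by rw [hgh i (mem_range.mp hi)]]

theorem engelProd_congr {K : ℕ} (hgh : ∀ i < K, g i = h i) :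
    engelProd b g K = engelProd b h K :=
  prod_congr rfl fun k hk => by
    rw [engelDenom_congr fun i hi => hgh i (by have := mem_range.mp hk; omega)]

theorem engelPartial_congr {K : ℕ} (hgh : ∀ i < K, g i = h i) :
    engelPartial b g K = engelPartial b h K :=
  sum_congr rfl fun n hn => engelProd_congr fun i hi => hgh i (by have := mem_range.mp hn; omega)

theorem abs_engelSumFrom_sub_le (hb : 1 < b) {K : ℕ} (hgh : ∀ i < K, g i = h i) :
    |engelSumFrom b g - engelSumFrom b h| ≤ b⁻¹ ^ K * (b - 1)⁻¹ := by
  have hc : b ≤ engelDenom b h K := le_engelDenom K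
  have tail_mem (t : ℕ → ℕ) :
      0 ≤ engelSumFrom (engelDenom b h K) t ∧ engelSumFrom (engelDenom b h K) t ≤ (b - 1)⁻¹ :=
    ⟨(engelSumFrom_pos (by linarith)).le, (engelSumFrom_le_inv_sub_one (by linarith)).trans
      (inv_anti₀ (by linarith) (by linarith))⟩
  rw [engelSumFrom_split hb K, engelSumFrom_split (g := h) hb K, engelPartial_congr hgh,
    engelProd_congr hgh, engelDenom_congr hgh, add_sub_add_left_eq_sub, ← mul_sub, abs_mul,
    abs_of_pos (engelProd_pos (by linarith) K)]
  gcongr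
  · exact engelProd_le_inv_pow (by linarith) K
  · exact abs_sub_le_of_nonneg_of_le (tail_mem _).1 (tail_mem _).2 (tail_mem _).1 (tail_mem _).2

theorem engelSumFrom_eq_cylinderRight (hb : 1 < b) {K : ℕ} (hg : ∀ i, K ≤ i → g i = 0) :
    engelSumFrom b g = cylinderRight b g K := by
  have : (fun i => g (i + K)) = fun _ => 0 := funext fun i => hg _ (by omega)
  rw [engelSumFrom_split hb K, this,
    engelSumFrom_const_zero (lt_of_lt_of_le hb (le_engelDenom K)), cylinderRight]

theorem cylinderRight_eq_engelPartial_update (hb : 1 < b) {k : ℕ} (hk : g k ≠ 0) :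
    cylinderRight b g (k + 1) = engelPartial b (Function.update g k (g k - 1)) (k + 1) := by
  have hagree : ∀ i < k, Function.update g k (g k - 1) i = g i :=
    fun i hi => Function.update_of_ne hi.ne _ _
  have hd : engelDenom b (Function.update g k (g k - 1)) (k + 1) = engelDenom b g (k + 1) - 1 := by
    rw [engelDenom_succ, engelDenom_succ, engelDenom_congr hagree, Function.update_self,
      Nat.cast_sub (Nat.one_le_iff_ne_zero.mpr hk)]
    ring
  have hs : 1 < engelDenom b g (k + 1) - 1 := by
    have : (1 : ℝ) ≤ g k := by exact_mod_cast Nat.one_le_iff_ne_zero.mpr hk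
    linarith [engelDenom_succ (b := b) (g := g) k, le_engelDenom (b := b) (g := g) k]
  have hs0 : engelDenom b g (k + 1) ≠ 0 := by linarith
  rw [cylinderRight, engelPartial_succ, engelPartial_succ, engelProd_succ, engelProd_succ,
    engelPartial_congr hagree, engelProd_congr hagree, hd]
  field_simp
  ring

noncomputable def uProd (u : ℕ → ℝ) (g : ℕ → ℕ) (K : ℕ) : ℝ := ∏ i ∈ range K, u (g i)

noncomputable def fTerm (u r : ℕ → ℝ) (g : ℕ → ℕ) (k : ℕ) : ℝ := r (g k) * uProd u g k

noncomputable def fPartial (u r : ℕ → ℝ) (g : ℕ → ℕ) (K : ℕ) : ℝ := ∑ k ∈ range K, fTerm u r g k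

section DigitSeries

variable {u r : ℕ → ℝ} {θ : ℝ} {g h : ℕ → ℕ}

theorem uProd_add (K k : ℕ) :
    uProd u g (K + k) = uProd u g K * uProd u (fun i => g (i + K)) k := by
  simp only [uProd, prod_range_add]
  exact congrArg _ (prod_congr rfl fun i _ => by rw [add_comm])

theorem fTerm_add (K k : ℕ) :
    fTerm u r g (k + K) = uProd u g K * fTerm u r (fun i => g (i + K)) k := by
  rw [fTerm, fTerm, add_comm k K, uProd_add, add_comm K k]
  ring

theorem uProd_congr {K : ℕ} (hgh : ∀ i < K, g i = h i) : uProd u g K = uProd u h K :=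
  prod_congr rfl fun i hi => by rw [hgh i (mem_range.mp hi)]

theorem fPartial_congr {K : ℕ} (hgh : ∀ i < K, g i = h i) :
    fPartial u r g K = fPartial u r h K :=
  sum_congr rfl fun k hk => by
    have hk := mem_range.mp hk
    rw [fTerm, fTerm, hgh k hk, uProd_congr fun i hi => hgh i (by omega)]

theorem fSeries_eq_tsum (hs : Summable (fTerm u r g)) : fSeries u r g = ∑' k, fTerm u r g k := by
  rw [hs.tsum_eq_zero_add]
  simp [fSeries, fTerm, uProd]

theorem fSeries_split (hs : ∀ g, Summable (fTerm u r g)) (K : ℕ) :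
    fSeries u r g = fPartial u r g K + uProd u g K * fSeries u r (fun i => g (i + K)) := by
  rw [fSeries_eq_tsum (hs g), fSeries_eq_tsum (hs _), ← (hs g).sum_add_tsum_nat_add K,
    ← tsum_mul_left]
  simp_rw [fTerm_add]
  rfl

theorem fSeries_succ (hs : ∀ g, Summable (fTerm u r g)) :
    fSeries u r g = r (g 0) + u (g 0) * fSeries u r (fun i => g (i + 1)) := by
  simpa [fPartial, fTerm, uProd] using fSeries_split hs 1 (g := g)

theorem abs_uProd_le (hθ : ∀ n, |u n| ≤ θ) (K : ℕ) : |uProd u g K| ≤ θ ^ K := by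
  rw [uProd, abs_prod]
  exact (prod_le_prod (fun _ _ => abs_nonneg _) fun _ _ => hθ _).trans (by simp)

theorem summable_fTerm (hθ1 : θ < 1) (hθ : ∀ n, |u n| ≤ θ) (hr01 : ∀ n, 0 < r n ∧ r n < 1) :
    Summable (fTerm u r g) :=
  .of_norm_bounded (summable_geometric_of_lt_one ((abs_nonneg _).trans (hθ 0)) hθ1) fun k => by
    rw [Real.norm_eq_abs, fTerm, abs_mul, abs_of_pos (hr01 _).1]
    exact (mul_le_of_le_one_left (abs_nonneg _) (hr01 _).2.le).trans (abs_uProd_le hθ k)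

theorem r_add_u_eq_rpred (hr : ∀ n, r n = 1 - ∑ i ∈ range (n + 1), u i) (n : ℕ) :
    r n + u n = rpred r n := by
  rcases n with _ | n
  · simp [rpred, hr 0]
  · rw [rpred, if_neg n.succ_ne_zero, Nat.add_sub_cancel, hr (n + 1), hr n,
      sum_range_succ _ (n + 1)]
    ring

theorem r_zero_add_u_zero (hr : ∀ n, r n = 1 - ∑ i ∈ range (n + 1), u i) : r 0 + u 0 = 1 := by
  simpa [rpred] using r_add_u_eq_rpred hr 0

theorem rpred_mem_Ioc (hr01 : ∀ n, 0 < r n ∧ r n < 1) (n : ℕ) : rpred r n ∈ Set.Ioc 0 1 := by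
  unfold rpred
  split_ifs
  · exact ⟨one_pos, le_rfl⟩
  · exact ⟨(hr01 _).1, (hr01 _).2.le⟩

-- `t ↦ r j + u j * t` is the affine map with `0 ↦ r j` and `1 ↦ rpred r j`.
theorem r_add_u_mul_mem_Ioc (hr : ∀ n, r n = 1 - ∑ i ∈ range (n + 1), u i)
    (hr01 : ∀ n, 0 < r n ∧ r n < 1) (j : ℕ) {t : ℝ} (ht : t ∈ Set.Icc 0 1) :
    r j + u j * t ∈ Set.Ioc 0 1 := by
  have e : r j + u j * t = (1 - t) * r j + t * rpred r j := by
    rw [← r_add_u_eq_rpred hr]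
    ring
  rw [e]
  simpa using convex_Ioc (0 : ℝ) 1 ⟨(hr01 j).1, (hr01 j).2.le⟩ (rpred_mem_Ioc hr01 j)
    (sub_nonneg.mpr ht.2) ht.1 (sub_add_cancel 1 t)

theorem r_add_u_mul_lt_one (hr : ∀ n, r n = 1 - ∑ i ∈ range (n + 1), u i)
    (hr01 : ∀ n, 0 < r n ∧ r n < 1) {j : ℕ} (hj : j ≠ 0) {t : ℝ} (ht : t ∈ Set.Icc 0 1) :
    r j + u j * t < 1 := by
  have e : r j + u j * t = (1 - t) * r j + t * r (j - 1) := by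
    rw [← show rpred r j = r (j - 1) from if_neg hj, ← r_add_u_eq_rpred hr]
    ring
  rw [e]
  exact (convex_Ioo (0 : ℝ) 1 (hr01 j) (hr01 (j - 1)) (sub_nonneg.mpr ht.2) ht.1
    (sub_add_cancel 1 t)).2

theorem fPartial_succ (K : ℕ) : fPartial u r g (K + 1) = fPartial u r g K + fTerm u r g K :=
  sum_range_succ _ _

theorem uProd_succ (K : ℕ) : uProd u g (K + 1) = uProd u g K * u (g K) :=
  prod_range_succ _ _

theorem fPartial_add_uProd_mul_succ (K : ℕ) (t : ℝ) :
    fPartial u r g (K + 1) + uProd u g (K + 1) * t =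
      fPartial u r g K + uProd u g K * (r (g K) + u (g K) * t) := by
  simp only [fPartial, uProd, fTerm, sum_range_succ, prod_range_succ]
  ring

theorem fPartial_add_uProd_mul_mem_Icc (hr : ∀ n, r n = 1 - ∑ i ∈ range (n + 1), u i)
    (hr01 : ∀ n, 0 < r n ∧ r n < 1) (K : ℕ) {t : ℝ} (ht : t ∈ Set.Icc 0 1) :
    fPartial u r g K + uProd u g K * t ∈ Set.Icc 0 1 := by
  induction K generalizing t with
  | zero => simpa [fPartial, uProd] using ht
  | succ K ih =>
    rw [fPartial_add_uProd_mul_succ]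
    exact ih (Set.Ioc_subset_Icc_self (r_add_u_mul_mem_Ioc hr hr01 _ ht))

theorem fPartial_add_uProd_update (hr : ∀ n, r n = 1 - ∑ i ∈ range (n + 1), u i) {k : ℕ}
    (hk : g k ≠ 0) :
    fPartial u r g (k + 1) + uProd u g (k + 1) =
      fPartial u r (Function.update g k (g k - 1)) (k + 1) := by
  have hagree : ∀ i < k, Function.update g k (g k - 1) i = g i :=
    fun i hi => Function.update_of_ne hi.ne _ _
  rw [← mul_one (uProd u g (k + 1)), fPartial_add_uProd_mul_succ, mul_one, r_add_u_eq_rpred hr,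
    rpred, if_neg hk, fPartial_succ, fTerm, Function.update_self,
    fPartial_congr hagree, uProd_congr hagree]
  ring

variable (hθ1 : θ < 1) (hθ : ∀ n, |u n| ≤ θ) (hr : ∀ n, r n = 1 - ∑ i ∈ range (n + 1), u i)
  (hr01 : ∀ n, 0 < r n ∧ r n < 1)
include hθ1 hθ hr hr01

theorem fSeries_const_zero : fSeries u r (fun _ => 0) = 1 := by
  have hrec := fSeries_succ (fun _ => summable_fTerm hθ1 hθ hr01) (g := fun _ => 0)
  have hsum := r_zero_add_u_zero hr
  have : r 0 * (fSeries u r (fun _ => 0) - 1) = 0 := by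
    linear_combination hrec + fSeries u r (fun _ => 0) * hsum
  simpa [sub_eq_zero, (hr01 0).1.ne'] using this

theorem fSeries_mem_Icc : fSeries u r g ∈ Set.Icc 0 1 := by
  have hs := summable_fTerm hθ1 hθ hr01 (g := g)
  have hP : Tendsto (uProd u g) atTop (𝓝 0) :=
    squeeze_zero_norm (fun K => abs_uProd_le hθ K)
      (tendsto_pow_atTop_nhds_zero_of_lt_one ((abs_nonneg _).trans (hθ 0)) hθ1)
  have hlim : Tendsto (fun K => fPartial u r g K + uProd u g K * 1) atTop (𝓝 (fSeries u r g)) := by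
    simpa [fSeries_eq_tsum hs, fPartial] using hs.hasSum.tendsto_sum_nat.add hP
  exact isClosed_Icc.mem_of_tendsto hlim
    (Eventually.of_forall fun K => fPartial_add_uProd_mul_mem_Icc hr hr01 K ⟨zero_le_one, le_rfl⟩)

theorem fSeries_mem_Ioc : fSeries u r g ∈ Set.Ioc 0 1 := by
  rw [fSeries_succ fun _ => summable_fTerm hθ1 hθ hr01]
  exact r_add_u_mul_mem_Ioc hr hr01 _ (fSeries_mem_Icc hθ1 hθ hr hr01)

theorem fSeries_lt_one {n : ℕ} (hn : g n ≠ 0) : fSeries u r g < 1 := by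
  induction n generalizing g with
  | zero =>
    rw [fSeries_succ fun _ => summable_fTerm hθ1 hθ hr01]
    exact r_add_u_mul_lt_one hr hr01 hn (fSeries_mem_Icc hθ1 hθ hr hr01)
  | succ n ih =>
    rw [fSeries_succ fun _ => summable_fTerm hθ1 hθ hr01]
    by_cases hg0 : g 0 = 0
    · have htail := ih (g := fun i => g (i + 1)) hn
      have hu0 : 0 < u 0 := by linarith [(hr01 0).2, r_zero_add_u_zero hr]
      rw [hg0]
      linarith [mul_lt_mul_of_pos_left htail hu0, r_zero_add_u_zero hr]
    · exact r_add_u_mul_lt_one hr hr01 hg0 (fSeries_mem_Icc hθ1 hθ hr hr01)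

end DigitSeries

theorem engelSum_mem_Ioc (g : ℕ → ℕ) : engelSum g ∈ Set.Ioc 0 1 :=
  ⟨engelSumFrom_pos one_lt_two, (engelSumFrom_le_inv_sub_one one_lt_two).trans (by norm_num)⟩

theorem isStrictLocalMaxPt_or_isStrictLocalMinPt_of_eventually {f : ℝ → ℝ} {x₀ P : ℝ}
    (hP : P ≠ 0) (h : ∀ᶠ x in 𝓝[≠] x₀, ∃ c > 0, f x - f x₀ = P * c) :
    IsStrictLocalMaxPt f x₀ ∨ IsStrictLocalMinPt f x₀ := by
  rcases hP.lt_or_gt with hP | hP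
  · refine .inl (h.mono fun x ⟨c, hc, e⟩ => ?_)
    linarith [mul_neg_of_neg_of_pos hP hc]
  · refine .inr (h.mono fun x ⟨c, hc, e⟩ => ?_)
    linarith [mul_pos hP hc]

section LocalExtremum

variable {u r : ℕ → ℝ} {θ : ℝ} {G : ℝ → ℕ → ℕ} {f : ℝ → ℝ}

theorem f_eq_of_mem_cylinder (hG : ∀ x ∈ Set.Ioc (0 : ℝ) 1, engelSum (G x) = x)
    (hf : ∀ x ∈ Set.Ioc (0 : ℝ) 1, f x = fSeries u r (G x)) (hs : ∀ g, Summable (fTerm u r g))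
    {g : ℕ → ℕ} {K : ℕ} {x : ℝ} (hlow : engelPartial 2 g K < x) (hup : x ≤ cylinderRight 2 g K) :
    (∀ i < K, G x i = g i) ∧
      f x = fPartial u r g K + uProd u g K * fSeries u r (fun i => G x (i + K)) := by
  have hx : x ∈ Set.Ioc 0 1 := ⟨(engelPartial_nonneg two_pos K).trans_lt hlow,
    hup.trans ((cylinderRight_le_inv_sub_one one_lt_two K).trans (by norm_num))⟩
  have hpre : ∀ i < K, G x i = g i :=
    eq_of_mem_cylinder one_lt_two (by rwa [engelSumFrom_two, hG x hx])
      (by rwa [engelSumFrom_two, hG x hx])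
  exact ⟨hpre, by rw [hf x hx, fSeries_split hs K, fPartial_congr hpre, uProd_congr hpre]⟩

variable (hθ1 : θ < 1) (hθ : ∀ n, |u n| ≤ θ) (hr : ∀ n, r n = 1 - ∑ i ∈ range (n + 1), u i)
  (hr01 : ∀ n, 0 < r n ∧ r n < 1)
  (hG : ∀ x ∈ Set.Ioc (0 : ℝ) 1, engelSum (G x) = x)
  (hGuniq : ∀ x ∈ Set.Ioc (0 : ℝ) 1, ∀ g : ℕ → ℕ, engelSum g = x → g = G x)
  (hf : ∀ x ∈ Set.Ioc (0 : ℝ) 1, f x = fSeries u r (G x))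
include hθ1 hθ hr hr01 hGuniq hf

theorem f_engelSum_eq_of_eq_zero {h : ℕ → ℕ} {K : ℕ} (hh : ∀ i, K ≤ i → h i = 0) :
    f (engelSum h) = fPartial u r h K + uProd u h K := by
  have htail : (fun i => h (i + K)) = fun _ => 0 := funext fun i => hh _ (by omega)
  rw [hf _ (engelSum_mem_Ioc h), ← hGuniq _ (engelSum_mem_Ioc h) h rfl,
    fSeries_split (fun _ => summable_fTerm hθ1 hθ hr01) K, htail,
    fSeries_const_zero hθ1 hθ hr hr01, mul_one]

include hG

theorem exists_f_sub_f_engelSum_eq_of_lt {h : ℕ → ℕ} {K : ℕ} (hh : ∀ i, K ≤ i → h i = 0) {x : ℝ}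
    (hx : x ∈ Set.Ioo (engelPartial 2 h K) (engelSum h)) :
    ∃ w < 1, f x - f (engelSum h) = uProd u h K * (w - 1) := by
  have hx₀ : engelSum h = cylinderRight 2 h K := engelSumFrom_eq_cylinderRight one_lt_two hh
  obtain ⟨hpre, hfx⟩ := f_eq_of_mem_cylinder hG hf (fun _ => summable_fTerm hθ1 hθ hr01)
    hx.1 (hx₀ ▸ hx.2.le)
  have htail : ∃ n, G x (n + K) ≠ 0 := by
    by_contra! hzero
    have hGx : G x = h := funext fun i => by
      rcases lt_or_ge i K with hi | hi
      · exact hpre i hi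
      · obtain ⟨n, rfl⟩ := Nat.exists_eq_add_of_le hi
        rw [hh _ hi, add_comm, hzero n]
    have hx01 : x ∈ Set.Ioc 0 1 :=
      ⟨(engelPartial_nonneg two_pos K).trans_lt hx.1, hx.2.le.trans (engelSum_mem_Ioc h).2⟩
    exact hx.2.ne (by rw [← hGx, hG x hx01])
  obtain ⟨n, hn⟩ := htail
  refine ⟨_, fSeries_lt_one hθ1 hθ hr hr01 (g := fun i => G x (i + K)) hn, ?_⟩
  rw [hfx, f_engelSum_eq_of_eq_zero hθ1 hθ hr hr01 hGuniq hf hh]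
  ring

theorem isStrictLocalMaxPt_or_isStrictLocalMinPt_engelSum (hu0 : ∀ n, u n ≠ 0) {h : ℕ → ℕ}
    {k : ℕ} (hh : ∀ i, k < i → h i = 0) (hk : h k ≠ 0) (hneg : u (h k) < 0)
    (hpos : 0 < u (h k - 1)) :
    IsStrictLocalMaxPt f (engelSum h) ∨ IsStrictLocalMinPt f (engelSum h) := by
  set h' := Function.update h k (h k - 1)
  have hagree : ∀ i < k, h' i = h i := fun i hi => Function.update_of_ne hi.ne _ _
  have hh'k : h' k = h k - 1 := Function.update_self _ _ _
  have hx₀ : engelSum h = cylinderRight 2 h (k + 1) :=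
    engelSumFrom_eq_cylinderRight one_lt_two fun i hi => hh i hi
  have hx₀' : engelSum h = engelPartial 2 h' (k + 1) :=
    hx₀.trans (cylinderRight_eq_engelPartial_update one_lt_two hk)
  have hfx₀ : f (engelSum h) = fPartial u r h' (k + 1) := by
    rw [f_engelSum_eq_of_eq_zero hθ1 hθ hr hr01 hGuniq hf (K := k + 1) fun i hi => hh i hi,
      fPartial_add_uProd_update hr hk]
  have hnhds : Set.Ioo (engelPartial 2 h (k + 1)) (cylinderRight 2 h' (k + 1)) ∈ 𝓝 (engelSum h) :=
    Ioo_mem_nhds (hx₀ ▸ engelPartial_lt_cylinderRight one_lt_two _)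
      (hx₀' ▸ engelPartial_lt_cylinderRight one_lt_two _)
  refine isStrictLocalMaxPt_or_isStrictLocalMinPt_of_eventually (P := uProd u h k)
    (prod_ne_zero_iff.mpr fun _ _ => hu0 _) ?_
  filter_upwards [nhdsWithin_le_nhds hnhds, self_mem_nhdsWithin] with x hx hne
  rcases lt_or_gt_of_ne hne with hlt | hgt
  · obtain ⟨w, hw, e⟩ := exists_f_sub_f_engelSum_eq_of_lt hθ1 hθ hr hr01 hG hGuniq hf
      (K := k + 1) (fun i hi => hh i hi) ⟨hx.1, hlt⟩
    rw [e, uProd_succ, mul_assoc]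
    exact ⟨_, mul_pos_of_neg_of_neg hneg (by linarith), rfl⟩
  · obtain ⟨-, e⟩ := f_eq_of_mem_cylinder hG hf (fun _ => summable_fTerm hθ1 hθ hr01)
      (hx₀' ▸ hgt) hx.2.le
    rw [e, hfx₀, add_sub_cancel_left, uProd_succ, uProd_congr hagree, hh'k, mul_assoc]
    exact ⟨_, mul_pos hpos (fSeries_mem_Ioc hθ1 hθ hr hr01).1, rfl⟩

end LocalExtremum

theorem Icc_subset_closure_engelSum_finite {G : ℝ → ℕ → ℕ}
    (hG : ∀ x ∈ Set.Ioc (0 : ℝ) 1, engelSum (G x) = x) (N : ℕ) :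
    Set.Icc (0 : ℝ) 1 ⊆
      closure (engelSum '' {h | ∃ k, h k = N ∧ ∀ i, k < i → h i = 0}) := by
  rw [← closure_Ioc zero_ne_one]
  refine closure_minimal (fun x hx => Metric.mem_closure_iff.mpr fun ε hε => ?_) isClosed_closure
  obtain ⟨k, hk⟩ := exists_pow_lt_of_lt_one hε (inv_lt_one_of_one_lt₀ one_lt_two)
  let h : ℕ → ℕ := fun i => if i < k then G x i else if i = k then N else 0
  refine ⟨engelSum h, ⟨h, ⟨k, by simp [h], fun i hi => by simp [h, hi.ne', hi.not_gt]⟩, rfl⟩, ?_⟩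
  calc dist x (engelSum h) = |engelSum (G x) - engelSum h| := by rw [Real.dist_eq, hG x hx]
    _ ≤ 2⁻¹ ^ k * (2 - 1)⁻¹ := abs_engelSumFrom_sub_le one_lt_two fun i hi => by simp [h, hi]
    _ < ε := by rwa [show (2 : ℝ) - 1 = 1 by norm_num, inv_one, mul_one]

end EngelSeries

open EngelSeries

theorem stmt17_general
    (u r : ℕ → ℝ)
    (hu_sum : HasSum u 1)
    (hu_abs : ∀ n, |u n| < 1)
    (hr : ∀ n, r n = 1 - ∑ i ∈ Finset.range (n + 1), u i)
    (hr01 : ∀ n, 0 < r n ∧ r n < 1)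
    (G : ℝ → ℕ → ℕ)
    (hG : ∀ x ∈ Set.Ioc (0:ℝ) 1, engelSum (G x) = x)
    (hGuniq : ∀ x ∈ Set.Ioc (0:ℝ) 1, ∀ g : ℕ → ℕ, engelSum g = x → g = G x)
    (f : ℝ → ℝ)
    (hf : ∀ x ∈ Set.Ioc (0:ℝ) 1, f x = fSeries u r (G x))
    (hu0 : ∀ n, u n ≠ 0) (hneg : ∃ n, u n < 0) :
    ∀ y ∈ Set.Icc (0:ℝ) 1, y ∈ closure
      {x : ℝ | x ∈ Set.Icc (0:ℝ) 1 ∧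
        (IsStrictLocalMaxPt f x ∨ IsStrictLocalMinPt f x)} := by
  obtain ⟨θ, hθ1, hθ⟩ := exists_abs_le_of_tendsto_zero hu_sum.summable.tendsto_atTop_zero hu_abs
  have hN : u (Nat.find hneg) < 0 := Nat.find_spec hneg
  have hN0 : Nat.find hneg ≠ 0 := by
    intro h0
    rw [h0] at hN
    linarith [(hr01 0).2, r_zero_add_u_zero hr]
  have hN' : 0 < u (Nat.find hneg - 1) :=
    (not_lt.mp (Nat.find_min hneg (by omega))).lt_of_ne' (hu0 _)
  intro y hy
  refine closure_mono ?_ (Icc_subset_closure_engelSum_finite hG (Nat.find hneg) hy)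
  rintro _ ⟨h, ⟨k, hk, hh⟩, rfl⟩
  refine ⟨Set.Ioc_subset_Icc_self (engelSum_mem_Ioc h), ?_⟩
  exact isStrictLocalMaxPt_or_isStrictLocalMinPt_engelSum hθ1 hθ hr hr01 hG hGuniq hf hu0 hh
    (hk ▸ hN0) (hk ▸ hN) (hk ▸ hN')

/-- if no u_n vanishes but some u_n < 0, the set of local extremum
points of f is dense in [0,1]. -/
theorem stmt17
    (u r : ℕ → ℝ)
    (hu_sum : HasSum u 1)
    (hu_abs : ∀ n, |u n| < 1)
    (hr : ∀ n, r n = 1 - ∑ i ∈ Finset.range (n + 1), u i)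
    (hr01 : ∀ n, 0 < r n ∧ r n < 1)
    (G : ℝ → ℕ → ℕ)
    (hG : ∀ x ∈ Set.Ioc (0:ℝ) 1, engelSum (G x) = x)
    (hGuniq : ∀ x ∈ Set.Ioc (0:ℝ) 1, ∀ g : ℕ → ℕ, engelSum g = x → g = G x)
    (f : ℝ → ℝ)
    (hf : ∀ x ∈ Set.Ioc (0:ℝ) 1, f x = fSeries u r (G x))
    (hf0 : f 0 = 0)
    (hu0 : ∀ n, u n ≠ 0) (hneg : ∃ n, u n < 0) :
    ∀ y ∈ Set.Icc (0:ℝ) 1, y ∈ closure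
      {x : ℝ | x ∈ Set.Icc (0:ℝ) 1 ∧
        (IsStrictLocalMaxPt f x ∨ IsStrictLocalMinPt f x)} :=
  stmt17_general u r hu_sum hu_abs hr hr01 G hG hGuniq f hf hu0 hneg
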